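/- In the Nilcoxeter algebra NC_n, the trace ε(T_σ T_γ) = 1 if and only if ℓ(σ) + ℓ(γ) = ℓ(σγ) and σγ = w₀; equivalently, for each σ ∈ S_n there is a unique γ ∈ S_n (namely γ = σ⁻¹w₀) with ε(T_σ T_γ) = 1. -/

import Mathlib

/-- Coxeter length of a permutation of `Fin m`, as the number of inversions. -/
def invLength {m : ℕ} (σ : Equiv.Perm (Fin m)) : ℕ :=
  (Finset.univ.filter (fun p : Fin m × Fin m => p.1 < p.2 ∧ σ p.2 < σ p.1)).card

/-- The longest element `w₀` of the symmetric group on `Fin m`, `j ↦ m - 1 - j`. -/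
def longest (m : ℕ) : Equiv.Perm (Fin m) :=
  ⟨Fin.rev, Fin.rev, fun i => i.rev_rev, fun i => i.rev_rev⟩

/-!
Since `T_σ T_γ` is either `T_{σγ}` or `0`, its `w₀`-coordinate is `1` exactly when the product
is length-additive and `σγ = w₀`, which forces `γ = σ⁻¹ w₀`. This `γ` is indeed length-additive:
right multiplication by `w₀` exchanges the inversions and the non-inversions of `τ`, so
`ℓ(τ) + ℓ(τ w₀) = ℓ(w₀)`, and with `τ = σ⁻¹` and `ℓ(σ⁻¹) = ℓ(σ)` this reads
`ℓ(σ) + ℓ(σ⁻¹ w₀) = ℓ(w₀)`.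
-/

open Finset

section InvLength

variable {m : ℕ}

@[simp]
lemma longest_apply (i : Fin m) : longest m i = i.rev := rfl

lemma invLength_inv (σ : Equiv.Perm (Fin m)) : invLength σ⁻¹ = invLength σ := by
  refine card_nbij' (fun p => (σ⁻¹ p.2, σ⁻¹ p.1)) (fun p => (σ p.2, σ p.1)) ?_ ?_ ?_ ?_ <;>
    intro p <;> simp +contextual [Equiv.Perm.inv_def]

lemma invLength_longest :
    invLength (longest m) = #{p : Fin m × Fin m | p.1 < p.2} := by
  simp [invLength]

lemma invLength_mul_longest (σ : Equiv.Perm (Fin m)) :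
    invLength (σ * longest m) = #{p : Fin m × Fin m | p.1 < p.2 ∧ σ p.1 < σ p.2} := by
  refine card_nbij' (fun p => (p.2.rev, p.1.rev)) (fun p => (p.2.rev, p.1.rev)) ?_ ?_ ?_ ?_ <;>
    -- unfold membership first: `longest_apply` must not rewrite under the filter's instance
    intro p <;> simp only [coe_filter, Set.mem_ofPred_eq] <;>
    simp +contextual

lemma invLength_add_invLength_mul_longest (σ : Equiv.Perm (Fin m)) :
    invLength σ + invLength (σ * longest m) = invLength (longest m) := by
  rw [invLength_mul_longest, invLength_longest, invLength, add_comm,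
    ← card_filter_add_card_filter_not (s := {p : Fin m × Fin m | p.1 < p.2})
      (p := fun p => σ p.1 < σ p.2)]
  simp only [filter_filter, not_lt]
  congr 2
  ext p
  simp only [mem_filter, mem_univ, true_and, and_congr_right_iff]
  exact fun hp => (σ.injective.ne hp.ne').le_iff_lt.symm

lemma invLength_add_invLength_inv_mul_longest (σ : Equiv.Perm (Fin m)) :
    invLength σ + invLength (σ⁻¹ * longest m) = invLength (longest m) := by
  simpa only [invLength_inv] using invLength_add_invLength_mul_longest σ⁻¹

end InvLength

lemma Module.Basis.coord_mul_eq_one_iff {G k A : Type*} [Mul G] [Semiring k] [Nontrivial k]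
    [NonUnitalNonAssocSemiring A] [Module k A] (ℓ : G → ℕ) (B : Module.Basis G k A)
    (hmul : ∀ σ γ, B σ * B γ = if ℓ (σ * γ) = ℓ σ + ℓ γ then B (σ * γ) else 0) (w σ γ : G) :
    B.coord w (B σ * B γ) = 1 ↔ ℓ σ + ℓ γ = ℓ (σ * γ) ∧ σ * γ = w := by
  classical
  rw [hmul]
  split_ifs with h
  · simp [h, Finsupp.single_apply]
  · simp [Ne.symm h]

theorem nilCoxeter_complementary_unique_general
    (k : Type*) [Field k] (A : Type*) [Ring A] [Algebra k A] (n : ℕ)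
    (B : Module.Basis (Equiv.Perm (Fin (n + 1))) k A)
    (hmul : ∀ σ γ : Equiv.Perm (Fin (n + 1)),
      B σ * B γ =
        if invLength (σ * γ) = invLength σ + invLength γ then B (σ * γ) else 0) :
    (∀ σ γ : Equiv.Perm (Fin (n + 1)),
        B.coord (longest (n + 1)) (B σ * B γ) = 1 ↔
          (invLength σ + invLength γ = invLength (σ * γ) ∧ σ * γ = longest (n + 1))) ∧
    (∀ σ : Equiv.Perm (Fin (n + 1)),
        ∃! γ : Equiv.Perm (Fin (n + 1)), B.coord (longest (n + 1)) (B σ * B γ) = 1) ∧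
    (∀ σ : Equiv.Perm (Fin (n + 1)),
        B.coord (longest (n + 1)) (B σ * B (σ⁻¹ * longest (n + 1))) = 1) := by
  have trace_eq_one_iff := B.coord_mul_eq_one_iff invLength hmul (longest (n + 1))
  have trace_complement_eq_one (σ : Equiv.Perm (Fin (n + 1))) :
      B.coord (longest (n + 1)) (B σ * B (σ⁻¹ * longest (n + 1))) = 1 :=
    (trace_eq_one_iff σ _).2
      ⟨by rw [mul_inv_cancel_left]; exact invLength_add_invLength_inv_mul_longest σ,
        mul_inv_cancel_left σ _⟩
  refine ⟨trace_eq_one_iff, fun σ => ⟨_, trace_complement_eq_one σ, fun γ hγ => ?_⟩,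
    trace_complement_eq_one⟩
  exact eq_inv_mul_of_mul_eq ((trace_eq_one_iff σ γ).1 hγ).2

/-- In the Nilcoxeter algebra `NC_{n+1}`, `ε(T_σ T_γ) = 1` iff
`ℓ(σ) + ℓ(γ) = ℓ(σγ)` and `σγ = w₀`; equivalently, for each `σ` there is a
unique `γ` (namely `γ = σ⁻¹ w₀`) with `ε(T_σ T_γ) = 1`. -/
theorem nilCoxeter_complementary_unique
    (k : Type*) [Field k] (A : Type*) [Ring A] [Algebra k A] (n : ℕ)
    (B : Module.Basis (Equiv.Perm (Fin (n + 1))) k A)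
    (hone : B 1 = 1)
    (hmul : ∀ σ γ : Equiv.Perm (Fin (n + 1)),
      B σ * B γ =
        if invLength (σ * γ) = invLength σ + invLength γ then B (σ * γ) else 0) :
    (∀ σ γ : Equiv.Perm (Fin (n + 1)),
        B.coord (longest (n + 1)) (B σ * B γ) = 1 ↔
          (invLength σ + invLength γ = invLength (σ * γ) ∧ σ * γ = longest (n + 1))) ∧
    (∀ σ : Equiv.Perm (Fin (n + 1)),
        ∃! γ : Equiv.Perm (Fin (n + 1)), B.coord (longest (n + 1)) (B σ * B γ) = 1) ∧
    (∀ σ : Equiv.Perm (Fin (n + 1)),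
        B.coord (longest (n + 1)) (B σ * B (σ⁻¹ * longest (n + 1))) = 1) :=
  nilCoxeter_complementary_unique_general k A n B hmul
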